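/- Let Φ : [0,∞) × ℝ^r → ℝ^r be a semiflow that is strongly monotone, i.e., x < y implies Φ_t(x) ≪ Φ_t(y) for all t > 0 (where u ≪ v means u_i < v_i for all i). If K ⊂ ℝ^r is a compact invariant unordered set with at least two points and p = sup K, then p ≪ Φ_t(p) for every t > 0. -/
import Mathlib


/-- For a strongly monotone semiflow, the supremum `p` of a compact invariant unordered set
with at least two points satisfies `p ≪ Φ_t(p)` for all `t > 0`. -/
theorem stmt1 {r : ℕ} (Φ : ℝ → (Fin r → ℝ) → (Fin r → ℝ))
    (hid : Φ 0 = id)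
    (hsemigroup : ∀ s ≥ (0:ℝ), ∀ t ≥ (0:ℝ), Φ (s + t) = Φ s ∘ Φ t)
    (hsm : ∀ x y : Fin r → ℝ, x < y → ∀ t > (0:ℝ), ∀ i, Φ t x i < Φ t y i)
    (K : Set (Fin r → ℝ)) (hK : IsCompact K)
    (hinv : ∀ t ≥ (0:ℝ), Φ t '' K = K)
    (hunord : ∀ x ∈ K, ∀ y ∈ K, x ≠ y → ¬ x ≤ y)
    (htwo : ∃ x ∈ K, ∃ y ∈ K, x ≠ y)
    (p : Fin r → ℝ) (hp : IsLUB K p) :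
    ∀ t > (0:ℝ), ∀ i, p i < Φ t p i := by
  -- p is not in K
  obtain ⟨a, ha, b, hb, hab⟩ := htwo
  have hpK : p ∉ K := by
    intro hpK
    by_cases hap : a = p
    · exact hunord b hb p hpK (fun h => hab (hap ▸ h.symm ▸ rfl)) (hp.1 hb)
    · exact hunord a ha p hpK hap (hp.1 ha)
  intro t ht i
  -- maximize coordinate i on K
  have hKne : K.Nonempty := ⟨a, ha⟩
  obtain ⟨y₀, hy₀K, hy₀max⟩ := hK.exists_isMaxOn hKne
    ((continuous_apply i).continuousOn)
  -- p i = y₀ i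
  have hpi : p i ≤ y₀ i := by
    have := (isLUB_pi (s := K) (f := p)).mp hp i
    refine this.2 ?_
    rintro _ ⟨y, hyK, rfl⟩
    exact hy₀max hyK
  -- find z with Φ t z = y₀
  have : y₀ ∈ Φ t '' K := (hinv t ht.le).symm ▸ hy₀K
  obtain ⟨z, hzK, hz⟩ := this
  have hzp : z < p := lt_of_le_of_ne (hp.1 hzK) (fun h => hpK (h ▸ hzK))
  have := hsm z p hzp t ht i
  rw [hz] at this
  exact lt_of_le_of_lt hpi this
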